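/- Let S, T be trees and U a full face of S (i.e. a subtree of S containing all broad relations of S among its edges). Then U ⊗ T is a full sub-broad poset of S ⊗ T: every broad relation (s_1,t_1)⋯(s_n,t_n) ≤ (s,t) of S ⊗ T with all s_i and s in U already holds in U ⊗ T. -/

import Mathlib

/-!
Every relation of `S ⊗ T` has a normal form: an `S`-move `a̲ ≤ s` at height `t`, and at each
letter `a` either nothing or a nontrivial `T`-move `b̲ ≤ t`, each of whose letters again carries
a normal form. Normal forms contain the generators and are closed under broad transitivity, so
every relation has one.

A normal form below `(s, t)` with letters in `U × T` is lifted to `U ⊗ T` by well-founded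
induction on `t` and then on `s`. If its `S`-move is trivial it starts with a `T`-move and
induction on `t` applies. Otherwise all letters lie strictly below `s`; since `U` is a full face
of a tree, each of them lies below exactly one child `c` of `s` in `U`, and the part of the normal
form below `c` is a normal form below `(c, t)`. Induction on `s` lifts these parts, and the
relation `children ≤ s` of `U` assembles them. An empty normal form forces `0 ≤ s` in `S` or
`0 ≤ t` in `T`, and either one gives `0 ≤ (s, t)` in `U ⊗ T`.
-/

universe u

namespace BroadPaper

/-- A broad relation on `X`: a relation between finite unordered tuples
(multisets) over `X` and elements of `X`. -/
abbrev Rel (X : Type u) : Type u := Multiset X → X → Prop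

variable {X : Type u} {Y : Type u} {A : Type u} {B : Type u} {Z : Type u}

/-- Broad transitivity: if `f₁ ⋯ fₙ ≤ e` and `g̲ᵢ ≤ fᵢ` then `g̲₁ ⋯ g̲ₙ ≤ e`,
encoded via a multiset of pairs `(g̲ᵢ, fᵢ)`. -/
def BTrans (r : Rel X) : Prop :=
  ∀ (p : Multiset (Multiset X × X)) (e : X),
    r (p.map Prod.snd) e → (∀ q ∈ p, r q.1 q.2) → r ((p.map Prod.fst).sum) e

/-- A pre-broad poset: reflexivity plus broad transitivity. -/
def IsPreBroad (r : Rel X) : Prop := (∀ e : X, r {e} e) ∧ BTrans r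

/-- A (commutative) broad poset: a pre-broad poset satisfying antisymmetry. -/
def IsBroad (r : Rel X) : Prop :=
  IsPreBroad r ∧ ∀ e f : X, r {e} f → r {f} e → e = f

/-- Simplicity: letters in any broad relation are pairwise distinct. -/
def Simple (r : Rel X) : Prop := ∀ fs e, r fs e → fs.Nodup

/-- The descendant relation `f ≤_d e`. -/
def descends (r : Rel X) (f e : X) : Prop := ∃ fs, r fs e ∧ f ∈ fs

def Comparable (r : Rel X) (f g : X) : Prop := descends r f g ∨ descends r g f

def Incomp (r : Rel X) (f g : X) : Prop := ¬ descends r f g ∧ ¬ descends r g f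

/-- Blockwise extension of a broad relation to a relation between tuples:
`fs ≤ es` iff `fs = f̲₁ ⋯ f̲ₖ`, `es = e₁ ⋯ eₖ` with `f̲ᵢ ≤ eᵢ`. -/
def tupleLE (r : Rel X) (fs es : Multiset X) : Prop :=
  ∃ p : Multiset (Multiset X × X),
    p.map Prod.snd = es ∧ (p.map Prod.fst).sum = fs ∧ ∀ q ∈ p, r q.1 q.2

/-- A leaf: no tuple strictly below `e`. -/
def IsLeaf (r : Rel X) (e : X) : Prop := ¬ ∃ fs, r fs e ∧ fs ≠ ({e} : Multiset X)

/-- `fs` is the maximum tuple strictly below `e` (written `e^↑`).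
If `fs ≠ 0`, `e` is a node; if `fs = 0`, `e` is a stump. -/
def upTuple (r : Rel X) (e : X) (fs : Multiset X) : Prop :=
  (r fs e ∧ fs ≠ ({e} : Multiset X)) ∧
    ∀ gs, r gs e → gs ≠ ({e} : Multiset X) → tupleLE r gs fs

def IsStump (r : Rel X) (e : X) : Prop := upTuple r e 0

/-- A dendroidally ordered set (tree): a finite simple broad poset in which
every element is a leaf, node or stump, with a `≤_d`-maximum (root). -/
def IsTree (r : Rel X) : Prop :=
  IsBroad r ∧ Finite X ∧ Simple r ∧
    (∀ e : X, IsLeaf r e ∨ ∃ fs, upTuple r e fs) ∧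
    ∃ rt : X, ∀ e, descends r e rt

def IsMaxEl (r : Rel X) (e : X) : Prop := ∀ s, descends r e s → s = e

/-- A forestially ordered set (forest): each element has a unique
`≤_d`-maximal element above it. -/
def IsForest (r : Rel X) : Prop :=
  IsBroad r ∧ Finite X ∧ Simple r ∧
    (∀ e : X, IsLeaf r e ∨ ∃ fs, upTuple r e fs) ∧
    ∀ e : X, ∃! rt : X, IsMaxEl r rt ∧ descends r e rt

/-- A map of broad posets: preserves broad relations (letterwise on tuples). -/
def BroadHom (r : Rel X) (r' : Rel Y) (φ : X → Y) : Prop :=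
  ∀ fs e, r fs e → r' (fs.map φ) (φ e)

/-- `rs` is the root tuple: the tuple of `≤_d`-maximal elements (no repeats). -/
def IsRootTuple (r : Rel X) (rs : Multiset X) : Prop :=
  rs.Nodup ∧ ∀ x, x ∈ rs ↔ IsMaxEl r x

/-- Independent map of forests: `φ(r̲_F)·e̲ ≤ r̲_{F'}` for some tuple `e̲`. -/
def Independent (r : Rel X) (r' : Rel Y) (φ : X → Y) : Prop :=
  ∃ (rs : Multiset X) (rs' : Multiset Y) (es : Multiset Y),
    IsRootTuple r rs ∧ IsRootTuple r' rs' ∧ tupleLE r' (rs.map φ + es) rs'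

/-- The (pre-)broad relation generated by a set of generating relations:
closure under reflexivity and broad transitivity. -/
inductive GenRel (gen : Rel X) : Rel X
  | of : ∀ fs e, gen fs e → GenRel gen fs e
  | refl : ∀ e, GenRel gen {e} e
  | btrans : ∀ (p : Multiset (Multiset X × X)) (e : X),
      GenRel gen (p.map Prod.snd) e → (∀ q ∈ p, GenRel gen q.1 q.2) →
      GenRel gen ((p.map Prod.fst).sum) e

/-- Generators of the tensor product `S ⊗ T`: relations `s̲ × t ≤ (s,t)` and
`s × t̲ ≤ (s,t)`. -/
def tensorGen (rS : Rel A) (rT : Rel B) : Rel (A × B) := fun xs x =>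
  (∃ as, rS as x.1 ∧ xs = as.map fun a => (a, x.2)) ∨
  (∃ bs, rT bs x.2 ∧ xs = bs.map fun b => (x.1, b))

/-- The tensor product broad relation on `A × B`. -/
def tensorRel (rS : Rel A) (rT : Rel B) : Rel (A × B) := GenRel (tensorGen rS rT)

/-- Product of tuples: all pairs from `as` and `bs`. -/
def mprod (as : Multiset A) (bs : Multiset B) : Multiset (A × B) :=
  as.bind fun a => bs.map fun b => (a, b)

end BroadPaper

namespace Multiset

variable {α β γ : Type*}

theorem exists_eq_add_of_map_eq_add {f : α → β} {D : Multiset α} {m₁ m₂ : Multiset β}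
    (h : D.map f = m₁ + m₂) : ∃ D₁ D₂, D = D₁ + D₂ ∧ D₁.map f = m₁ ∧ D₂.map f = m₂ := by
  classical
  induction m₁ using Multiset.induction_on generalizing D with
  | empty => exact ⟨0, D, by simp, rfl, by simpa using h⟩
  | cons b m₁ ih =>
    have hb : b ∈ D.map f := by simp [h]
    obtain ⟨d, hd, rfl⟩ := mem_map.1 hb
    rw [← cons_erase hd, map_cons, cons_add, cons_inj_right] at h
    obtain ⟨D₁, D₂, hD, rfl, rfl⟩ := ih h
    exact ⟨d ::ₘ D₁, D₂, by rw [← cons_erase hd, hD, cons_add], by simp, rfl⟩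

theorem exists_blocks_of_sum_eq_map {f : α → β} (w : Multiset (Multiset β × γ))
    {D : Multiset α} (h : (w.map Prod.fst).sum = D.map f) :
    ∃ W : Multiset (Multiset α × γ),
      W.map (fun z => (z.1.map f, z.2)) = w ∧ (W.map Prod.fst).sum = D := by
  induction w using Multiset.induction_on generalizing D with
  | empty => exact ⟨0, rfl, by simpa [eq_comm] using h⟩
  | cons u w ih =>
    rw [map_cons, sum_cons] at h
    obtain ⟨D₁, D₂, rfl, h₁, h₂⟩ := exists_eq_add_of_map_eq_add h.symm
    obtain ⟨W, rfl, rfl⟩ := ih h₂.symm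
    exact ⟨(D₁, u.2) ::ₘ W, by simp [h₁], by simp⟩

theorem sum_sum_map (S : Multiset (Multiset α)) (f : α → Multiset β) :
    (S.sum.map f).sum = (S.map fun s => (s.map f).sum).sum := by
  induction S using Multiset.induction_on <;> simp [*]

theorem sum_map_filter_of_eq_zero {M : Type*} [AddCommMonoid M] (P : α → Prop)
    [DecidablePred P] {s : Multiset α} {f : α → M} (h : ∀ a ∈ s, ¬ P a → f a = 0) :
    ((s.filter P).map f).sum = (s.map f).sum := by
  have h0 : ((s.filter fun a => ¬ P a).map f).sum = 0 := sum_eq_zero fun x hx => by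
    obtain ⟨a, ha, rfl⟩ := mem_map.1 hx
    exact h a (mem_filter.1 ha).1 (mem_filter.1 ha).2
  conv_rhs => rw [← filter_add_not P s, map_add, sum_add, h0, add_zero]

theorem filter_sum_map (pr : β → Prop) [DecidablePred pr] (p : Multiset α)
    (f : α → Multiset β) : ((p.map f).sum).filter pr = (p.map fun a => (f a).filter pr).sum :=
  filter_bind p f pr

theorem filter_sum_map_eq_of_unique [DecidableEq α] (pr : β → Prop) [DecidablePred pr]
    {p : Multiset α} {f : α → Multiset β} {a : α} (hp : p.Nodup) (ha : a ∈ p)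
    (h : ∀ b ∈ p, b ≠ a → (f b).filter pr = 0) :
    ((p.map f).sum).filter pr = (f a).filter pr := by
  rw [filter_sum_map, sum_map_eq_nsmul_single a (fun b hb hbp => h b hbp hb),
    count_eq_one_of_mem hp ha, one_nsmul]

theorem sum_map_filter_eq_of_existsUnique [DecidableEq β] (R : α → β → Prop) [DecidableRel R]
    {V : Multiset β} {D : Multiset α} (hV : V.Nodup) (hex : ∀ d ∈ D, ∃ v ∈ V, R d v)
    (huniq : ∀ d ∈ D, ∀ v ∈ V, ∀ v' ∈ V, R d v → R d v' → v = v') :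
    (V.map fun v => D.filter (R · v)).sum = D := by
  induction D using Multiset.induction_on with
  | empty => simp
  | cons d D ih =>
    obtain ⟨v₀, hv₀, hdv₀⟩ := hex d (mem_cons_self d D)
    have hd : (V.map fun v => if R d v then ({d} : Multiset α) else 0).sum = {d} := by
      rw [sum_map_eq_nsmul_single v₀ fun v hne hv =>
        if_neg fun hdv => hne (huniq d (mem_cons_self d D) v hv v₀ hv₀ hdv hdv₀),
        count_eq_one_of_mem hV hv₀, one_nsmul, if_pos hdv₀]
    simp only [filter_cons, sum_map_add, hd, singleton_add]
    rw [ih (fun d' hd' => hex d' (mem_cons_of_mem hd'))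
      (fun d' hd' => huniq d' (mem_cons_of_mem hd'))]

end Multiset

namespace BroadPaper

open scoped Classical

section BroadRelations

variable {X : Type u} {r : Rel X}

theorem BTrans.bind {ι : Type*} (hr : BTrans r) {W : Multiset ι} {g : ι → X}
    {f : ι → Multiset X} {e : X} (h : r (W.map g) e) (hW : ∀ z ∈ W, r (f z) (g z)) :
    r (W.map f).sum e := by
  have := hr (W.map fun z => (f z, g z)) e (by rwa [Multiset.map_map])
    (Multiset.forall_mem_map_iff.2 hW)
  rwa [Multiset.map_map] at this

theorem BTrans.rel_zero (hr : BTrans r) {fs : Multiset X} {e : X} (h : r fs e)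
    (h0 : ∀ f ∈ fs, r 0 f) : r 0 e := by
  simpa using hr.bind (W := fs) (g := id) (f := fun _ => 0) (by simpa using h) h0

theorem GenRel.bTrans (gen : Rel X) : BTrans (GenRel gen) := GenRel.btrans

def Forked (r : Rel X) (x y : X) : Prop :=
  ∃ gs e b₁ b₂, r gs e ∧ b₁ ∈ gs ∧ b₂ ∈ gs ∧ b₁ ≠ b₂ ∧ descends r x b₁ ∧ descends r y b₂

namespace IsPreBroad

variable (hr : IsPreBroad r)
include hr

theorem descends_refl (e : X) : descends r e e := ⟨{e}, hr.1 e, Multiset.mem_singleton_self e⟩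

theorem rel_erase_add [DecidableEq X] {gs fs : Multiset X} {e g : X} (h : r gs e)
    (hg : g ∈ gs) (hfs : r fs g) : r (gs.erase g + fs) e := by
  have := hr.2 ((gs.erase g).map (fun x => ({x}, x)) + {(fs, g)}) e
    (by simpa [Function.comp_def, add_comm, Multiset.cons_erase hg] using h)
    (by
      intro q hq
      rcases Multiset.mem_add.1 hq with hq | hq
      · obtain ⟨x, -, rfl⟩ := Multiset.mem_map.1 hq
        exact hr.1 x
      · rw [Multiset.mem_singleton.1 hq]
        exact hfs)
  simpa [Multiset.sum_map_singleton] using this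

theorem descends_trans {x y z : X} (hxy : descends r x y) (hyz : descends r y z) :
    descends r x z := by
  obtain ⟨fs, hfs, hx⟩ := hxy
  obtain ⟨gs, hgs, hy⟩ := hyz
  exact ⟨_, hr.rel_erase_add hgs hy hfs, Multiset.mem_add.2 (Or.inr hx)⟩

variable (hs : Simple r)
include hs

theorem eq_singleton_of_mem {gs : Multiset X} {e : X} (h : r gs e) (he : e ∈ gs) :
    gs = {e} := by
  -- substituting `gs` for its own letter `e` repeats every other letter of `gs`
  have hdisj := (Multiset.nodup_add.1 (hs _ _ (hr.rel_erase_add h he h))).2.2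
  have hzero : gs.erase e = 0 := Multiset.eq_zero_of_forall_notMem fun x hx =>
    Multiset.disjoint_left.1 hdisj hx (Multiset.mem_of_mem_erase hx)
  rw [← Multiset.cons_erase he, hzero]
  rfl

theorem eq_of_mem_of_descends {gs : Multiset X} {e a b : X} (h : r gs e) (ha : a ∈ gs)
    (hb : b ∈ gs) (hab : descends r a b) : a = b := by
  by_contra hne
  obtain ⟨fs, hfs, haf⟩ := hab
  have hdisj := (Multiset.nodup_add.1 (hs _ _ (hr.rel_erase_add h hb hfs))).2.2
  exact Multiset.disjoint_left.1 hdisj ((Multiset.mem_erase_of_ne hne).2 ha) haf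

theorem not_forked_of_descends {x y z : X} (hx : descends r z x) (hy : descends r z y) :
    ¬ Forked r x y := by
  rintro ⟨gs, e, b₁, b₂, h, hb₁, hb₂, hne, hxb₁, hyb₂⟩
  obtain ⟨fs, hfs, hz⟩ := hr.descends_trans hx hxb₁
  have hzb₂ := hr.descends_trans hy hyb₂
  by_cases hzb : z = b₂
  · subst hzb
    exact hne (hr.eq_of_mem_of_descends hs h hb₂ hb₁ ⟨fs, hfs, hz⟩).symm
  · -- `z` and `b₂` are two distinct letters of `gs` with `b₁` replaced by `fs`
    exact hzb (hr.eq_of_mem_of_descends hs (hr.rel_erase_add h hb₁ hfs)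
      (Multiset.mem_add.2 (Or.inr hz))
      (Multiset.mem_add.2 (Or.inl ((Multiset.mem_erase_of_ne hne.symm).2 hb₂))) hzb₂)

theorem eq_of_descends_of_mem {gs : Multiset X} {e b₁ b₂ x : X} (h : r gs e) (hb₁ : b₁ ∈ gs)
    (hb₂ : b₂ ∈ gs) (hx₁ : descends r x b₁) (hx₂ : descends r x b₂) : b₁ = b₂ := by
  by_contra hne
  exact hr.not_forked_of_descends hs hx₁ hx₂
    ⟨gs, e, b₁, b₂, h, hb₁, hb₂, hne, hr.descends_refl _, hr.descends_refl _⟩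

end IsPreBroad

theorem IsBroad.descends_antisymm (hr : IsBroad r) (hs : Simple r) {x y : X}
    (hxy : descends r x y) (hyx : descends r y x) : x = y := by
  obtain ⟨fs, hfs, hx⟩ := hxy
  obtain ⟨gs, hgs, hy⟩ := hyx
  have h := hr.1.eq_singleton_of_mem hs (hr.1.rel_erase_add hfs hx hgs)
    (Multiset.mem_add.2 (Or.inr hy))
  have hgs₁ : gs = {y} :=
    (Multiset.le_singleton.1 (h ▸ Multiset.le_add_left _ _)).resolve_left
      (by rintro rfl; exact Multiset.notMem_zero y hy)
  have hfs₁ : fs = {x} := by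
    rw [hgs₁, add_eq_right] at h
    rw [← Multiset.cons_erase hx, h]
    rfl
  exact hr.2 x y (hfs₁ ▸ hfs) (hgs₁ ▸ hgs)

end BroadRelations

section Trees

variable {X : Type u} {r : Rel X}

theorem IsPreBroad.filter_sum_map_eq_of_descends {ι β : Type*} (hr : IsPreBroad r)
    (hs : Simple r) {p : Multiset ι} {g : ι → X} {f : ι → Multiset β} (π : β → X) {e v : X}
    {i : ι} (h : r (p.map g) e) (hi : i ∈ p) (hv : descends r v (g i))
    (hlet : ∀ j ∈ p, ∀ y ∈ f j, descends r (π y) (g j)) :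
    ((p.map f).sum).filter (fun y => descends r (π y) v) =
      (f i).filter (fun y => descends r (π y) v) := by
  have hnd := hs _ _ h
  refine Multiset.filter_sum_map_eq_of_unique _ (hnd.of_map g) hi fun j hj hji => ?_
  refine Multiset.filter_eq_nil.2 fun y hy hyv => hji ?_
  refine Multiset.inj_on_of_nodup_map hnd j hj i hi ?_
  exact hr.eq_of_descends_of_mem hs h (Multiset.mem_map_of_mem g hj)
    (Multiset.mem_map_of_mem g hi) (hlet j hj y hy) (hr.descends_trans hyv hv)

theorem upTuple.exists_descends {e x : X} {fs : Multiset X} (hup : upTuple r e fs)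
    (hx : descends r x e) (hne : x ≠ e) : ∃ c ∈ fs, descends r x c := by
  obtain ⟨gs, hgs, hxg⟩ := hx
  have hgne : gs ≠ {e} := by rintro rfl; exact hne (Multiset.mem_singleton.1 hxg)
  obtain ⟨p, rfl, rfl, hq⟩ := hup.2 gs hgs hgne
  -- here and below, `(p.map f).sum` is `p.bind f` by definition
  obtain ⟨q, hqp, hxq⟩ := Multiset.mem_bind.1 hxg
  exact ⟨q.2, Multiset.mem_map_of_mem _ hqp, q.1, hq q hqp, hxq⟩

def StrictlyDescends (r : Rel X) (x y : X) : Prop := descends r x y ∧ x ≠ y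

theorem upTuple.strictlyDescends_of_mem (hr : IsPreBroad r) (hs : Simple r) {e c : X}
    {fs : Multiset X} (hup : upTuple r e fs) (hc : c ∈ fs) : StrictlyDescends r c e :=
  ⟨⟨fs, hup.1.1, hc⟩, fun h => hup.1.2 (hr.eq_singleton_of_mem hs hup.1.1 (h ▸ hc))⟩

namespace IsTree

variable (hr : IsTree r)
include hr

theorem isBroad : IsBroad r := hr.1

theorem isPreBroad : IsPreBroad r := hr.1.1

theorem simple : Simple r := hr.2.2.1

theorem descends_antisymm {x y : X} (hxy : descends r x y) (hyx : descends r y x) : x = y :=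
  hr.isBroad.descends_antisymm hr.simple hxy hyx

theorem exists_upTuple {gs : Multiset X} {e : X} (h : r gs e) (hne : gs ≠ {e}) :
    ∃ fs, upTuple r e fs :=
  (hr.2.2.2.1 e).resolve_left fun hleaf => hleaf ⟨gs, h, hne⟩

theorem exists_child {x e : X} (hx : descends r x e) (hne : x ≠ e) :
    ∃ fs, upTuple r e fs ∧ ∃ c ∈ fs, descends r x c := by
  obtain ⟨gs, hgs, hxg⟩ := hx
  obtain ⟨fs, hup⟩ := hr.exists_upTuple hgs (by rintro rfl; exact hne (Multiset.mem_singleton.1 hxg))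
  exact ⟨fs, hup, hup.exists_descends ⟨gs, hgs, hxg⟩ hne⟩

theorem wellFounded : WellFounded (StrictlyDescends r) := by
  have : Finite X := hr.2.1
  have : IsTrans X (StrictlyDescends r) := ⟨fun _ _ _ hxy hyz =>
    ⟨hr.isPreBroad.descends_trans hxy.1 hyz.1,
      fun hxz => hxy.2 (hr.descends_antisymm hxy.1 (hxz ▸ hyz.1))⟩⟩
  have : Std.Irrefl (StrictlyDescends r) := ⟨fun _ hx => hx.2 rfl⟩
  exact Finite.wellFounded_of_trans_of_irrefl _

theorem comparable_or_forked (x y : X) : Comparable r x y ∨ Forked r x y := by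
  obtain ⟨rt, hrt⟩ := hr.2.2.2.2
  suffices ∀ w x y, descends r x w → descends r y w → Comparable r x y ∨ Forked r x y from
    this rt x y (hrt x) (hrt y)
  intro w
  induction w using hr.wellFounded.induction with
  | _ w ih =>
  intro x y hx hy
  by_cases hxw : x = w
  · exact Or.inl (Or.inr (hxw ▸ hy))
  by_cases hyw : y = w
  · exact Or.inl (Or.inl (hyw ▸ hx))
  obtain ⟨fs, hup, cx, hcx, hxc⟩ := hr.exists_child hx hxw
  obtain ⟨cy, hcy, hyc⟩ := hup.exists_descends hy hyw
  by_cases hc : cx = cy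
  · exact ih cx (hup.strictlyDescends_of_mem hr.isPreBroad hr.simple hcx) x y hxc (hc ▸ hyc)
  · exact Or.inr ⟨fs, w, cx, cy, hup.1.1, hcx, hcy, hc, hxc, hyc⟩

theorem comparable_of_descends {x y z : X} (hy : descends r x y) (hz : descends r x z) :
    Comparable r y z :=
  (hr.comparable_or_forked y z).resolve_right
    (hr.isPreBroad.not_forked_of_descends hr.simple hy hz)

theorem rel_filter_descends {gs : Multiset X} {e v : X} (h : r gs e) (hv : descends r v e)
    (hmax : ∀ w ∈ gs, descends r v w → w = v) : r (gs.filter (descends r · v)) v := by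
  induction e using hr.wellFounded.induction generalizing gs with
  | _ e ih =>
  by_cases hve : v = e
  · subst hve
    rwa [Multiset.filter_eq_self.2 fun w hw => ⟨gs, h, hw⟩]
  have hgs : gs ≠ {e} := by
    rintro rfl
    exact hve (hmax e (Multiset.mem_singleton_self e) hv).symm
  obtain ⟨fs, hup⟩ := hr.exists_upTuple h hgs
  obtain ⟨c, hc, hvc⟩ := hup.exists_descends hv hve
  obtain ⟨p, hsnd, rfl, hq⟩ := hup.2 gs h hgs
  obtain ⟨q, hqp, rfl⟩ := Multiset.mem_map.1 (hsnd ▸ hc)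
  rw [hr.isPreBroad.filter_sum_map_eq_of_descends hr.simple (fun x => x) (hsnd ▸ hup.1.1) hqp hvc
    fun j hj w hw => ⟨j.1, hq j hj, hw⟩]
  exact ih q.2 (hup.strictlyDescends_of_mem hr.isPreBroad hr.simple hc) (hq q hqp) hvc
    fun w hw => hmax w (Multiset.mem_bind.2 ⟨q, hqp, hw⟩)

end IsTree

end Trees

section Faces

variable {X Y : Type u} {r : Rel X}

/-- `IsTree (restrict r P)` says that `P` is a full face of `r`. -/
def restrict (r : Rel X) (P : Set X) : Rel {x : X // x ∈ P} :=
  fun fs e => r (fs.map Subtype.val) e.val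

theorem broadHom_restrict (r : Rel X) (P : Set X) : BroadHom (restrict r P) r Subtype.val :=
  fun _ _ h => h

namespace BroadHom

variable {r' : Rel Y} {φ : X → Y} (hφ : BroadHom r r' φ)
include hφ

theorem map_descends {x y : X} (h : descends r x y) : descends r' (φ x) (φ y) := by
  obtain ⟨fs, hfs, hx⟩ := h
  exact ⟨fs.map φ, hφ fs y hfs, Multiset.mem_map_of_mem φ hx⟩

theorem map_forked (hinj : Function.Injective φ) {x y : X} (h : Forked r x y) :
    Forked r' (φ x) (φ y) := by
  obtain ⟨gs, e, b₁, b₂, hgs, hb₁, hb₂, hne, hx, hy⟩ := h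
  exact ⟨gs.map φ, φ e, φ b₁, φ b₂, hφ gs e hgs, Multiset.mem_map_of_mem φ hb₁,
    Multiset.mem_map_of_mem φ hb₂, hinj.ne hne, hφ.map_descends hx, hφ.map_descends hy⟩

end BroadHom

theorem descends_restrict_of_descends (hr : IsTree r) {P : Set X}
    (hU : IsTree (restrict r P)) {u v : {x : X // x ∈ P}} (h : descends r u.val v.val) :
    descends (restrict r P) u v := by
  rcases hU.comparable_or_forked u v with (huv | hvu) | hforked
  · exact huv
  · have huv : u = v :=
      Subtype.ext (hr.descends_antisymm h ((broadHom_restrict r P).map_descends hvu))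
    exact huv ▸ hU.isPreBroad.descends_refl u
  · exact absurd ((broadHom_restrict r P).map_forked Subtype.val_injective hforked)
      (hr.isPreBroad.not_forked_of_descends hr.simple (hr.isPreBroad.descends_refl _) h)

end Faces

section NormalForms

variable {A B : Type u} {rS : Rel A} {rT : Rel B}

/-- Normal forms of relations `C ≤ (a, b)` of `S ⊗ T`. With flag `true`: an `S`-move
`a̲ ≤ a` at height `b`, followed by a block at each letter of `a̲`. With flag `false`: a block
at `(a, b)`, which is `(a, b)` itself or a nontrivial `T`-move `b̲ ≤ b` at `a` followed by a
normal form at each letter of `b̲`. -/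
inductive NF (rS : Rel A) (rT : Rel B) : Bool → A → B → Multiset (A × B) → Prop
  | smove {a : A} {b : B} (p : Multiset (Multiset (A × B) × A)) (h : rS (p.map Prod.snd) a)
      (hp : ∀ q ∈ p, NF rS rT false q.2 b q.1) : NF rS rT true a b (p.map Prod.fst).sum
  | letter {a : A} {b : B} : NF rS rT false a b {(a, b)}
  | tmove {a : A} {b : B} (w : Multiset (Multiset (A × B) × B)) (h : rT (w.map Prod.snd) b)
      (hne : w.map Prod.snd ≠ {b}) (hw : ∀ u ∈ w, NF rS rT true a u.2 u.1) :
      NF rS rT false a b (w.map Prod.fst).sum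

namespace NF

theorem descends_of_mem (hS : IsPreBroad rS) (hT : IsPreBroad rT) {fl : Bool} {a : A} {b : B}
    {C : Multiset (A × B)} (h : NF rS rT fl a b C) :
    ∀ xy ∈ C, descends rS xy.1 a ∧ descends rT xy.2 b := by
  induction h with
  | smove p h _ ih =>
    intro xy hxy
    obtain ⟨q, hqp, hxyq⟩ := Multiset.mem_bind.1 hxy
    exact ⟨hS.descends_trans (ih q hqp xy hxyq).1 ⟨_, h, Multiset.mem_map_of_mem _ hqp⟩,
      (ih q hqp xy hxyq).2⟩
  | letter =>
    intro xy hxy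
    rw [Multiset.mem_singleton.1 hxy]
    exact ⟨hS.descends_refl _, hT.descends_refl _⟩
  | tmove w h _ _ ih =>
    intro xy hxy
    obtain ⟨u, huw, hxyu⟩ := Multiset.mem_bind.1 hxy
    exact ⟨(ih u huw xy hxyu).1,
      hT.descends_trans (ih u huw xy hxyu).2 ⟨_, h, Multiset.mem_map_of_mem _ huw⟩⟩

theorem of_block (hS : IsPreBroad rS) {a : A} {b : B} {C : Multiset (A × B)}
    (h : NF rS rT false a b C) : NF rS rT true a b C := by
  simpa using NF.smove {(C, a)} (by simpa using hS.1 a) (by simpa using h)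

theorem refl (hS : IsPreBroad rS) (a : A) (b : B) : NF rS rT true a b {(a, b)} :=
  of_block hS letter

theorem smove_bind {ι : Type*} (hS : BTrans rS) {W : Multiset ι} {g : ι → A}
    {f : ι → Multiset (A × B)} {a : A} {b : B} (h : rS (W.map g) a)
    (hW : ∀ z ∈ W, NF rS rT true (g z) b (f z)) : NF rS rT true a b (W.map f).sum := by
  have hsplit : ∀ z ∈ W, ∃ p : Multiset (Multiset (A × B) × A), rS (p.map Prod.snd) (g z) ∧
      (∀ q ∈ p, NF rS rT false q.2 b q.1) ∧ (p.map Prod.fst).sum = f z := by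
    intro z hz
    have hz := hW z hz
    generalize f z = C at hz
    cases hz with
    | smove p h hp => exact ⟨p, h, hp, rfl⟩
  choose! P hPrel hPblocks hPsum using hsplit
  have hrel : rS ((W.bind P).map Prod.snd) a := by
    rw [Multiset.map_bind]
    exact hS.bind h hPrel
  have hsum : ((W.bind P).map Prod.fst).sum = (W.map f).sum := by
    rw [Multiset.map_bind, Multiset.sum_bind]
    exact congrArg Multiset.sum (Multiset.map_congr rfl hPsum)
  rw [← hsum]
  exact NF.smove (W.bind P) hrel fun q hq =>
    let ⟨z, hz, hqz⟩ := Multiset.mem_bind.1 hq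
    hPblocks z hz q hqz

theorem bind (hS : IsPreBroad rS) {fl : Bool} {a : A} {b : B} {ms : Multiset (A × B)}
    (h : NF rS rT fl a b ms) (p : Multiset (Multiset (A × B) × (A × B)))
    (hp : p.map Prod.snd = ms) (hq : ∀ q ∈ p, NF rS rT true q.2.1 q.2.2 q.1) :
    NF rS rT true a b (p.map Prod.fst).sum := by
  induction h generalizing p with
  | smove p₀ h _ ih =>
    obtain ⟨W, rfl, rfl⟩ := Multiset.exists_blocks_of_sum_eq_map p₀ hp.symm
    rw [Multiset.sum_sum_map, Multiset.map_map]
    refine smove_bind hS.2 (g := Prod.snd) (by simpa [Function.comp_def] using h)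
      fun z hz => ih _ (Multiset.mem_map_of_mem _ hz) z.1 rfl
        fun q hq' => hq q (Multiset.mem_bind.2 ⟨z, hz, hq'⟩)
  | letter =>
    obtain ⟨q, rfl, hq₂⟩ := Multiset.map_eq_singleton.1 hp
    simpa [hq₂] using hq q (Multiset.mem_singleton_self q)
  | tmove w h hne _ ih =>
    obtain ⟨W, rfl, rfl⟩ := Multiset.exists_blocks_of_sum_eq_map w hp.symm
    rw [Multiset.sum_sum_map, Multiset.map_map]
    refine of_block hS ?_
    simpa using NF.tmove (W.map fun z => ((z.1.map Prod.fst).sum, z.2))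
      (by simpa [Function.comp_def] using h) (by simpa [Function.comp_def] using hne)
      (Multiset.forall_mem_map_iff.2 fun z hz => ih _ (Multiset.mem_map_of_mem _ hz) z.1 rfl
        fun q hq' => hq q (Multiset.mem_bind.2 ⟨z, hz, hq'⟩))

theorem of_tensorRel (hS : IsPreBroad rS) {C : Multiset (A × B)} {x : A × B}
    (h : tensorRel rS rT C x) : NF rS rT true x.1 x.2 C := by
  induction h with
  | of C x hgen =>
    rcases hgen with ⟨as, has, rfl⟩ | ⟨bs, hbs, rfl⟩
    · rw [← Multiset.bind_singleton]
      exact smove_bind hS.2 (g := id) (by simpa using has) fun a _ => refl hS a x.2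
    · by_cases hbs₁ : bs = {x.2}
      · simpa [hbs₁] using refl hS x.1 x.2
      · rw [← Multiset.bind_singleton]
        refine of_block hS ?_
        have := NF.tmove (rS := rS) (bs.map fun b => ({(x.1, b)}, b)) (by simpa using hbs)
          (by simpa using hbs₁) (Multiset.forall_mem_map_iff.2 fun b _ => refl hS x.1 b)
        rwa [Multiset.map_map] at this
  | refl x => exact refl hS x.1 x.2
  | btrans p x _ _ ih ihq => exact ih.bind hS p rfl ihq

theorem rel_zero_or_rel_zero (hS : BTrans rS) (hT : BTrans rT) {fl : Bool} {a : A} {b : B}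
    {C : Multiset (A × B)} (h : NF rS rT fl a b C) (hC : C = 0) : rS 0 a ∨ rT 0 b := by
  induction h with
  | @smove a b p h _ ih =>
    have ih' : ∀ q ∈ p, rS 0 q.2 ∨ rT 0 b := fun q hq =>
      ih q hq (Multiset.sum_eq_zero_iff.1 hC _ (Multiset.mem_map_of_mem _ hq))
    by_cases hb : rT 0 b
    · exact Or.inr hb
    · exact Or.inl (hS.rel_zero h (Multiset.forall_mem_map_iff.2 fun q hq =>
        (ih' q hq).resolve_right hb))
  | letter => exact absurd hC (Multiset.singleton_ne_zero _)
  | @tmove a b w h _ _ ih =>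
    have ih' : ∀ u ∈ w, rS 0 a ∨ rT 0 u.2 := fun u hu =>
      ih u hu (Multiset.sum_eq_zero_iff.1 hC _ (Multiset.mem_map_of_mem _ hu))
    by_cases ha : rS 0 a
    · exact Or.inl ha
    · exact Or.inr (hT.rel_zero h (Multiset.forall_mem_map_iff.2 fun u hu =>
        (ih' u hu).resolve_left ha))

theorem smove_filter_descends (hS : IsTree rS) (hT : IsPreBroad rT) {a : A} {b : B}
    {p : Multiset (Multiset (A × B) × A)} (h : rS (p.map Prod.snd) a)
    (hp : ∀ q ∈ p, NF rS rT false q.2 b q.1) {v : A} (hv : descends rS v a)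
    (hbelow : ∀ q ∈ p, ¬ descends rS v q.2) :
    NF rS rT true v b ((p.map Prod.fst).sum.filter fun xy => descends rS xy.1 v) := by
  have hlet : ∀ q ∈ p, ∀ xy ∈ q.1, descends rS xy.1 q.2 := fun q hq xy hxy =>
    ((hp q hq).descends_of_mem hS.isPreBroad hT xy hxy).1
  have hrel := hS.rel_filter_descends h hv fun w hw hvw => by
    obtain ⟨q, hqp, rfl⟩ := Multiset.mem_map.1 hw
    exact absurd hvw (hbelow q hqp)
  rw [Multiset.filter_map] at hrel
  -- a block survives the filter entirely or not at all, according to its letter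
  have hsum : ((p.filter fun q => descends rS q.2 v).map Prod.fst).sum =
      (p.map Prod.fst).sum.filter fun xy => descends rS xy.1 v := by
    rw [Multiset.filter_sum_map,
      ← Multiset.sum_map_filter_of_eq_zero (s := p) (fun q => descends rS q.2 v)]
    · refine congrArg Multiset.sum (Multiset.map_congr rfl fun q hq => ?_)
      exact (Multiset.filter_eq_self.2 fun xy hxy =>
        hS.isPreBroad.descends_trans (hlet q (Multiset.mem_of_mem_filter hq) xy hxy)
          (Multiset.mem_filter.1 hq).2).symm
    · intro q hqp hqv
      refine Multiset.filter_eq_nil.2 fun xy hxy hxyv => ?_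
      rcases hS.comparable_of_descends hxyv (hlet q hqp xy hxy) with hvq | hqv'
      · exact hbelow q hqp hvq
      · exact hqv hqv'
  rw [← hsum]
  exact NF.smove _ hrel fun q hq => hp q (Multiset.mem_of_mem_filter hq)

theorem filter_descends (hS : IsTree rS) (hT : IsPreBroad rT) {fl : Bool} {a : A} {b : B}
    {C : Multiset (A × B)} (h : NF rS rT fl a b C) {v : A} (hv : descends rS v a)
    (hmax : ∀ xy ∈ C, descends rS v xy.1 → xy.1 = v) :
    NF rS rT true v b (C.filter fun xy => descends rS xy.1 v) := by
  induction h generalizing v with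
  | smove p h hp ih =>
    by_cases hbelow : ∃ q ∈ p, descends rS v q.2
    · obtain ⟨q, hqp, hvq⟩ := hbelow
      rw [hS.isPreBroad.filter_sum_map_eq_of_descends hS.simple Prod.fst h hqp hvq
        fun q hq xy hxy => ((hp q hq).descends_of_mem hS.isPreBroad hT xy hxy).1]
      exact ih q hqp hvq fun xy hxy => hmax xy (Multiset.mem_bind.2 ⟨q, hqp, hxy⟩)
    · push Not at hbelow
      exact smove_filter_descends hS hT h hp hv hbelow
  | letter =>
    obtain rfl := hmax _ (Multiset.mem_singleton_self _) hv
    rw [Multiset.filter_eq_self.2 fun xy hxy => by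
      rw [Multiset.mem_singleton.1 hxy]; exact hS.isPreBroad.descends_refl _]
    exact refl hS.isPreBroad _ _
  | tmove w h hne _ ih =>
    rw [Multiset.filter_sum_map]
    refine of_block hS.isPreBroad ?_
    have := NF.tmove (w.map fun u => (u.1.filter fun xy => descends rS xy.1 v, u.2))
      (by simpa [Function.comp_def] using h) (by simpa [Function.comp_def] using hne)
      (Multiset.forall_mem_map_iff.2 fun u hu =>
        ih u hu hv fun xy hxy => hmax xy (Multiset.mem_bind.2 ⟨u, hu, hxy⟩))
    rwa [Multiset.map_map] at this

theorem block_or_forall_strictlyDescends (hS : IsTree rS) (hT : IsPreBroad rT) {a : A} {b : B}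
    {C : Multiset (A × B)} (h : NF rS rT true a b C) :
    NF rS rT false a b C ∨ ∀ xy ∈ C, StrictlyDescends rS xy.1 a := by
  cases h with
  | smove p hrel hp =>
  by_cases ha : a ∈ p.map Prod.snd
  · obtain ⟨q, rfl, rfl⟩ :=
      Multiset.map_eq_singleton.1 (hS.isPreBroad.eq_singleton_of_mem hS.simple hrel ha)
    left
    simpa using hp q (Multiset.mem_singleton_self q)
  · right
    intro xy hxy
    refine ⟨((NF.smove p hrel hp).descends_of_mem hS.isPreBroad hT xy hxy).1, fun hxya => ha ?_⟩
    obtain ⟨q, hqp, hxyq⟩ := Multiset.mem_bind.1 hxy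
    have hqa : q.2 = a := hS.descends_antisymm ⟨_, hrel, Multiset.mem_map_of_mem _ hqp⟩
      (hxya ▸ ((hp q hqp).descends_of_mem hS.isPreBroad hT xy hxyq).1)
    exact hqa ▸ Multiset.mem_map_of_mem _ hqp

end NF

end NormalForms

section FullFace

variable {A B : Type u} {rS : Rel A} {rT : Rel B} {P : Set A}

theorem tensorRel_zero {X : Type u} {r : Rel X} {x : X} {b : B} (h : r 0 x ∨ rT 0 b) :
    tensorRel r rT 0 (x, b) :=
  GenRel.of _ _ (h.imp (fun h => ⟨0, h, rfl⟩) fun h => ⟨0, h, rfl⟩)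

theorem tensorRel_restrict_of_block (hT : IsPreBroad rT) (hTs : Simple rT)
    {s : {a : A // a ∈ P}} {t : B} {D : Multiset ({a : A // a ∈ P} × B)}
    (ih : ∀ t', StrictlyDescends rT t' t → ∀ D' : Multiset ({a : A // a ∈ P} × B),
      NF rS rT true s.val t' (D'.map fun y => (y.1.val, y.2)) →
        tensorRel (restrict rS P) rT D' (s, t'))
    (h : NF rS rT false s.val t (D.map fun y => (y.1.val, y.2))) :
    tensorRel (restrict rS P) rT D (s, t) := by
  generalize hC : D.map (fun y => (y.1.val, y.2)) = C at h
  cases h with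
  | letter =>
    obtain ⟨d, rfl, hd⟩ := Multiset.map_eq_singleton.1 hC
    obtain ⟨h₁, h₂⟩ := Prod.ext_iff.1 hd
    obtain rfl : d = (s, t) := Prod.ext (Subtype.ext h₁) h₂
    exact GenRel.refl _
  | tmove w hrel hne hw =>
    obtain ⟨W, rfl, rfl⟩ := Multiset.exists_blocks_of_sum_eq_map w hC.symm
    have hrel' : rT (W.map Prod.snd) t := by simpa [Function.comp_def] using hrel
    refine (GenRel.bTrans _).bind (g := fun z => (s, z.2)) (f := Prod.fst)
      (GenRel.of _ _ (Or.inr ⟨W.map Prod.snd, hrel', by simp⟩)) fun z hz => ?_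
    have hzt : z.2 ≠ t := by
      intro hzt
      refine hne (hT.eq_singleton_of_mem hTs hrel ?_)
      rw [← hzt]
      exact Multiset.mem_map_of_mem Prod.snd (Multiset.mem_map_of_mem _ hz)
    exact ih z.2 ⟨⟨_, hrel', Multiset.mem_map_of_mem _ hz⟩, hzt⟩ z.1
      (hw _ (Multiset.mem_map_of_mem _ hz))

theorem tensorRel_restrict_of_strictlyDescends (hS : IsTree rS) (hT : IsPreBroad rT)
    (hU : IsTree (restrict rS P)) {s : {a : A // a ∈ P}} {t : B}
    {D : Multiset ({a : A // a ∈ P} × B)}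
    (ih : ∀ c, StrictlyDescends (restrict rS P) c s → ∀ D' : Multiset ({a : A // a ∈ P} × B),
      NF rS rT true c.val t (D'.map fun y => (y.1.val, y.2)) →
        tensorRel (restrict rS P) rT D' (c, t))
    (h : NF rS rT true s.val t (D.map fun y => (y.1.val, y.2))) (hD : D ≠ 0)
    (hlt : ∀ d ∈ D, StrictlyDescends rS d.1.val s.val) :
    tensorRel (restrict rS P) rT D (s, t) := by
  have hlt' : ∀ d ∈ D, StrictlyDescends (restrict rS P) d.1 s := fun d hd =>
    ⟨descends_restrict_of_descends hS hU (hlt d hd).1,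
      fun hds => (hlt d hd).2 (congrArg Subtype.val hds)⟩
  obtain ⟨d₀, hd₀⟩ := Multiset.exists_mem_of_ne_zero hD
  obtain ⟨cs, hup, -⟩ := hU.exists_child (hlt' d₀ hd₀).1 (hlt' d₀ hd₀).2
  have hcs : rS (cs.map Subtype.val) s.val := hup.1.1
  have hletter : ∀ c ∈ cs, c.val ∈ cs.map Subtype.val := fun c hc => Multiset.mem_map_of_mem _ hc
  have hcover : ∀ d ∈ D, ∃ c ∈ cs, descends rS d.1.val c.val := fun d hd =>
    let ⟨c, hc, hdc⟩ := hup.exists_descends (hlt' d hd).1 (hlt' d hd).2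
    ⟨c, hc, (broadHom_restrict rS P).map_descends hdc⟩
  have hunique : ∀ d ∈ D, ∀ c ∈ cs, ∀ c' ∈ cs,
      descends rS d.1.val c.val → descends rS d.1.val c'.val → c = c' :=
    fun _ _ c hc c' hc' hdc hdc' => Subtype.ext
      (hS.isPreBroad.eq_of_descends_of_mem hS.simple hcs (hletter c hc) (hletter c' hc') hdc hdc')
  have hmax : ∀ c ∈ cs, ∀ xy ∈ D.map (fun y => (y.1.val, y.2)),
      descends rS c.val xy.1 → xy.1 = c.val := by
    intro c hc xy hxy hcxy
    obtain ⟨d, hd, rfl⟩ := Multiset.mem_map.1 hxy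
    obtain ⟨c', hc', hdc'⟩ := hcover d hd
    obtain rfl : c = c' := Subtype.ext (hS.isPreBroad.eq_of_mem_of_descends hS.simple hcs
      (hletter c hc) (hletter c' hc') (hS.isPreBroad.descends_trans hcxy hdc'))
    exact hS.descends_antisymm hdc' hcxy
  have hblock : ∀ c ∈ cs,
      tensorRel (restrict rS P) rT (D.filter fun d => descends rS d.1.val c.val) (c, t) := by
    intro c hc
    have hcs_lt := hup.strictlyDescends_of_mem hU.isPreBroad hU.simple hc
    refine ih c hcs_lt _ ?_
    have := h.filter_descends hS hT ((broadHom_restrict rS P).map_descends hcs_lt.1) (hmax c hc)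
    rwa [Multiset.filter_map] at this
  have := (GenRel.bTrans _).bind (g := fun c => (c, t))
    (f := fun c => D.filter fun d => descends rS d.1.val c.val)
    (GenRel.of _ (s, t) (Or.inl ⟨cs, hup.1.1, rfl⟩)) hblock
  rwa [Multiset.sum_map_filter_eq_of_existsUnique _ (hU.simple _ _ hup.1.1) hcover
    hunique] at this

theorem tensorRel_restrict_of_NF (hS : IsTree rS) (hT : IsTree rT)
    (hU : IsTree (restrict rS P)) (s : {a : A // a ∈ P}) (t : B)
    (D : Multiset ({a : A // a ∈ P} × B))
    (h : NF rS rT true s.val t (D.map fun y => (y.1.val, y.2))) :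
    tensorRel (restrict rS P) rT D (s, t) := by
  induction t using hT.wellFounded.induction generalizing s D with
  | _ t iht =>
  induction s using hU.wellFounded.induction generalizing D with
  | _ s ihs =>
  rcases h.block_or_forall_strictlyDescends hS hT.isPreBroad with hblock | hlt
  · exact tensorRel_restrict_of_block hT.isPreBroad hT.simple
      (fun t' ht' => iht t' ht' s) hblock
  by_cases hD : D = 0
  · subst hD
    exact tensorRel_zero (h.rel_zero_or_rel_zero hS.isPreBroad.2 hT.isPreBroad.2 rfl)
  exact tensorRel_restrict_of_strictlyDescends hS hT.isPreBroad hU ihs h hD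
    fun d hd => hlt _ (Multiset.mem_map_of_mem _ hd)

end FullFace

/-- If `U` is a full face of `S` (a subset whose restricted
relation is a tree containing all relations of `S` among its elements), then
`U ⊗ T` is a full sub-broad poset of `S ⊗ T`: every relation of `S ⊗ T`
whose letters and target have first coordinate in `U` holds in `U ⊗ T`. -/
theorem stmt17 {A B : Type u} (rS : Rel A) (rT : Rel B)
    (hS : IsTree rS) (hT : IsTree rT) (P : Set A)
    (hU : IsTree (fun (fs : Multiset {a : A // a ∈ P}) (e : {a : A // a ∈ P}) =>
      rS (fs.map Subtype.val) e.val)) :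
    ∀ (xs : Multiset ({a : A // a ∈ P} × B)) (x : {a : A // a ∈ P} × B),
      tensorRel rS rT (xs.map fun y => (y.1.val, y.2)) (x.1.val, x.2) →
      tensorRel
        (fun (fs : Multiset {a : A // a ∈ P}) (e : {a : A // a ∈ P}) =>
          rS (fs.map Subtype.val) e.val)
        rT xs x :=
  fun xs x h => tensorRel_restrict_of_NF hS hT hU x.1 x.2 xs (NF.of_tensorRel hS.isPreBroad h)

end BroadPaper
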